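/- Let k be a field of characteristic 2 and A = k[x,y]/(x², y²+x). The automorphism group of A as an R-algebra-with-H-comodule-structure (R = k[x]/(x²), H = α₂'s Hopf algebra, coaction ρ(x)=1⊗x, ρ(y)=x⊗1+1⊗y) that also fixes the augmentation ε (x,y ↦ 0) contains a nonidentity element; hence the category of pointed finite torsors over Spec(k[x]/x²) contains an object with a nontrivial automorphism and is therefore not cofiltered in the strong sense of having unique morphisms to a terminal pro-object. -/

import Mathlib

/-!
In characteristic 2 the relation y² + x = 0 says x = y², so (y + x)² = y² + x² = y² and the
translation y ↦ y + x is an involutive automorphism of A fixing x. It commutes with the coaction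
because ρ(x) = 1 ⊗ x, and it preserves ε because ε(x) = 0. It is not the identity because x ≠ 0
in A.
-/

open TensorProduct

noncomputable abbrev Hk (k : Type) [Field k] : Type :=
  Polynomial k ⧸ Ideal.span {(Polynomial.X : Polynomial k) ^ 2}

noncomputable def xH (k : Type) [Field k] : Hk k :=
  Ideal.Quotient.mk _ Polynomial.X

noncomputable abbrev Ak (k : Type) [Field k] : Type :=
  MvPolynomial (Fin 2) k ⧸
    Ideal.span {(MvPolynomial.X 0 : MvPolynomial (Fin 2) k) ^ 2,
      MvPolynomial.X 1 ^ 2 + MvPolynomial.X 0}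

noncomputable def xA (k : Type) [Field k] : Ak k :=
  Ideal.Quotient.mk _ (MvPolynomial.X 0)

noncomputable def yA (k : Type) [Field k] : Ak k :=
  Ideal.Quotient.mk _ (MvPolynomial.X 1)

theorem two_eq_zero_of_charP_two_scalars (k B : Type*) [CommSemiring k] [CharP k 2]
    [Semiring B] [Algebra k B] : (2 : B) = 0 := by
  rw [← map_ofNat (algebraMap k B) 2, CharTwo.two_eq_zero, map_zero]

theorem Polynomial.mk_X_pow_ne_zero_of_lt {R : Type*} [CommRing R] [Nontrivial R] {m n : ℕ}
    (h : m < n) : Ideal.Quotient.mk (Ideal.span {X ^ n}) (X ^ m : Polynomial R) ≠ 0 := by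
  rw [Ne, Ideal.Quotient.eq_zero_iff_mem, Ideal.mem_span_singleton, X_pow_dvd_iff]
  intro hcoeff
  simpa using hcoeff m h

namespace Ak

variable (k : Type) [Field k]

theorem xA_sq : xA k ^ 2 = 0 :=
  Ideal.Quotient.eq_zero_iff_mem.2 (Ideal.subset_span (by simp))

theorem yA_sq_add_xA : yA k ^ 2 + xA k = 0 :=
  Ideal.Quotient.eq_zero_iff_mem.2 (Ideal.subset_span (by simp))

variable {k} in
theorem algHom_ext {B : Type*} [Semiring B] [Algebra k B] {f g : Ak k →ₐ[k] B}
    (hx : f (xA k) = g (xA k)) (hy : f (yA k) = g (yA k)) : f = g :=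
  Ideal.Quotient.algHom_ext k <| MvPolynomial.algHom_ext fun i => by
    fin_cases i
    exacts [hx, hy]

section lift

variable {B : Type*} [CommRing B] [Algebra k B] (a b : B) (ha : a ^ 2 = 0) (hb : b ^ 2 + a = 0)

noncomputable def lift : Ak k →ₐ[k] B :=
  Ideal.Quotient.liftₐ _ (MvPolynomial.aeval ![a, b]) fun _ hp =>
    RingHom.mem_ker.1 <| (Ideal.span_le (I := RingHom.ker (MvPolynomial.aeval ![a, b]))).2
      (by simp [Set.insert_subset_iff, ha, hb]) hp

@[simp]
theorem lift_xA : lift k a b ha hb (xA k) = a :=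
  (Ideal.Quotient.lift_mk _ _ _).trans (MvPolynomial.aeval_X _ _)

@[simp]
theorem lift_yA : lift k a b ha hb (yA k) = b :=
  (Ideal.Quotient.lift_mk _ _ _).trans (MvPolynomial.aeval_X _ _)

end lift

variable [CharP k 2]

-- A maps to k[t]/(t⁴) by x ↦ t², y ↦ t, and t² ≠ 0 there.
theorem xA_ne_zero : xA k ≠ 0 := by
  set t : Polynomial k ⧸ Ideal.span {(Polynomial.X : Polynomial k) ^ 4} :=
    Ideal.Quotient.mk _ Polynomial.X
  have ht : (t ^ 2) ^ 2 = 0 := by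
    rw [← pow_mul, ← map_pow, Ideal.Quotient.eq_zero_iff_mem]
    exact Ideal.subset_span rfl
  have ht2 : t ^ 2 + t ^ 2 = 0 := by
    rw [← two_mul, two_eq_zero_of_charP_two_scalars k, zero_mul]
  intro hx
  have := lift_xA k (t ^ 2) t ht ht2
  rw [hx, map_zero, ← map_pow] at this
  exact Polynomial.mk_X_pow_ne_zero_of_lt (by norm_num) this.symm

theorem xA_add_yA_sq_add_xA : (xA k + yA k) ^ 2 + xA k = 0 := by
  linear_combination
    xA_sq k + yA_sq_add_xA k + xA k * yA k * two_eq_zero_of_charP_two_scalars k (Ak k)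

noncomputable def shiftHom : Ak k →ₐ[k] Ak k :=
  lift k (xA k) (xA k + yA k) (xA_sq k) (xA_add_yA_sq_add_xA k)

theorem shiftHom_comp_shiftHom : (shiftHom k).comp (shiftHom k) = AlgHom.id k (Ak k) :=
  algHom_ext (by simp [shiftHom]) <| by
    simp only [shiftHom, AlgHom.comp_apply, lift_xA, lift_yA, map_add, AlgHom.id_apply]
    linear_combination xA k * two_eq_zero_of_charP_two_scalars k (Ak k)

noncomputable def shift : Ak k ≃ₐ[k] Ak k :=
  AlgEquiv.ofAlgHom (shiftHom k) (shiftHom k) (shiftHom_comp_shiftHom k)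
    (shiftHom_comp_shiftHom k)

@[simp]
theorem shift_xA : shift k (xA k) = xA k := by
  simp [shift, shiftHom]

@[simp]
theorem shift_yA : shift k (yA k) = xA k + yA k := by
  simp [shift, shiftHom]

theorem shift_ne_refl : shift k ≠ AlgEquiv.refl := fun h =>
  xA_ne_zero k <| by simpa using AlgEquiv.congr_fun h (yA k)

theorem map_shift_comp_eq_comp_shift {C : Type*} [CommRing C] [Algebra k C]
    (ρ : Ak k →ₐ[k] C ⊗[k] Ak k) (c : C) (hρx : ρ (xA k) = 1 ⊗ₜ xA k)
    (hρy : ρ (yA k) = c ⊗ₜ 1 + 1 ⊗ₜ yA k) :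
    (Algebra.TensorProduct.map (AlgHom.id k C) (shift k : Ak k →ₐ[k] Ak k)).comp ρ =
      ρ.comp (shift k) :=
  algHom_ext (by simp [hρx]) <| by
    simp [hρx, hρy, tmul_add]
    abel

theorem comp_shift_eq_self {B : Type*} [Semiring B] [Algebra k B] (ε : Ak k →ₐ[k] B)
    (hεx : ε (xA k) = 0) : ε.comp (shift k) = ε :=
  algHom_ext (by simp) (by simp [hεx])

end Ak

theorem stmt15_general (k : Type) [Field k] [CharP k 2]
    (ρ : Ak k →ₐ[k] Hk k ⊗[k] Ak k)
    (hρx : ρ (xA k) = (1 : Hk k) ⊗ₜ[k] xA k)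
    (hρy : ρ (yA k) = xH k ⊗ₜ[k] (1 : Ak k) + (1 : Hk k) ⊗ₜ[k] yA k)
    (ε : Ak k →ₐ[k] k) (hεx : ε (xA k) = 0) :
    ∃ σ : Ak k ≃ₐ[k] Ak k,
      σ (xA k) = xA k ∧
      (∀ a : Ak k,
        (Algebra.TensorProduct.map (AlgHom.id k (Hk k)) (σ : Ak k →ₐ[k] Ak k)) (ρ a)
          = ρ (σ a)) ∧
      (∀ a : Ak k, ε (σ a) = ε a) ∧
      σ ≠ AlgEquiv.refl :=
  ⟨Ak.shift k, Ak.shift_xA k,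
    AlgHom.congr_fun (Ak.map_shift_comp_eq_comp_shift k ρ (xH k) hρx hρy),
    AlgHom.congr_fun (Ak.comp_shift_eq_self k ε hεx), Ak.shift_ne_refl k⟩

/-- the pointed α₂-torsor Spec A → Spec(k[x]/x²) admits a nonidentity
automorphism: there is a k-algebra automorphism σ of A fixing the R-algebra structure
(σ(x) = x), compatible with the coaction ρ and fixing the augmentation ε, with σ ≠ id. -/
theorem stmt15 (k : Type) [Field k] [CharP k 2]
    (ρ : Ak k →ₐ[k] Hk k ⊗[k] Ak k)
    (hρx : ρ (xA k) = (1 : Hk k) ⊗ₜ[k] xA k)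
    (hρy : ρ (yA k) = xH k ⊗ₜ[k] (1 : Ak k) + (1 : Hk k) ⊗ₜ[k] yA k)
    (ε : Ak k →ₐ[k] k) (hεx : ε (xA k) = 0) (hεy : ε (yA k) = 0) :
    ∃ σ : Ak k ≃ₐ[k] Ak k,
      σ (xA k) = xA k ∧
      (∀ a : Ak k,
        (Algebra.TensorProduct.map (AlgHom.id k (Hk k)) (σ : Ak k →ₐ[k] Ak k)) (ρ a)
          = ρ (σ a)) ∧
      (∀ a : Ak k, ε (σ a) = ε a) ∧
      σ ≠ AlgEquiv.refl :=
  stmt15_general k ρ hρx hρy ε hεx
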